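/- Suppose ℓ ≥ 2, 0 ≤ k < d, and there exists K_0 ∈ K_k([0,1]^d) whose ℓ-fold sumset ℓK_0 is nowhere dense in ℝ^d. Then the set of K ∈ K_k([0,1]^d) for which ℓK is nowhere dense is comeager in the complete metric space K_k([0,1]^d) with the Hausdorff metric. -/

import Mathlib

open Set Module TopologicalSpace

/-- The unit cube `[0,1]^d`. -/
def unitCube (d : ℕ) : Set (EuclideanSpace ℝ (Fin d)) :=
  {x | ∀ i, x i ∈ Set.Icc (0 : ℝ) 1}

/-- The unit cube as a (metric) space. -/
abbrev Cube (d : ℕ) := {x : EuclideanSpace ℝ (Fin d) // x ∈ unitCube d}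

/-- The `ℓ`-fold sumset `ℓK = {k₁ + ⋯ + k_ℓ : kᵢ ∈ K}`. -/
def msum {E : Type*} [AddCommMonoid E] (ℓ : ℕ) (K : Set E) : Set E :=
  {x | ∃ f : Fin ℓ → E, (∀ i, f i ∈ K) ∧ ∑ i, f i = x}

/-- A nonempty compact `K ⊆ [0,1]^d` intersects every `k`-dimensional affine
subspace meeting `[0,1]^d`. -/
def HitsAll (d k : ℕ) (K : NonemptyCompacts (Cube d)) : Prop :=
  ∀ V : AffineSubspace ℝ (EuclideanSpace ℝ (Fin d)), V ≠ ⊥ →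
    finrank ℝ V.direction = k →
    ((V : Set (EuclideanSpace ℝ (Fin d))) ∩ unitCube d).Nonempty →
    ∃ p ∈ (K : Set (Cube d)), (p : EuclideanSpace ℝ (Fin d)) ∈ V

/-- The set of a nonempty compact subset of the cube, viewed in `ℝ^d`. -/
def realize (d : ℕ) (K : NonemptyCompacts (Cube d)) : Set (EuclideanSpace ℝ (Fin d)) :=
  Subtype.val '' (K : Set (Cube d))

/-!
The Hausdorff metric on `NonemptyCompacts` induces the Vietoris topology, in which
`K ↦ ℓK` is continuous and `{C | y ∈ C}` is closed. Hence for each basic open set `U` of `ℝ^d`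
the set of `K` with `U ⊄ ℓK` is open, and the set of `K` with `ℓK` nowhere dense is the
countable intersection of these; it remains to show that it is dense.

Given `K` and a mesh `1/N`, replace `K` by the union of the copies `(z + K₀)/N` of `K₀` lying
in the grid cells that meet `K`. This set is within `diam [0,1]^d / N` of `K`; it meets every
`k`-plane `V`, because `V` passes through a point of `K` in some cell, and the preimage of `V`
under `x ↦ (z + x)/N` is a `k`-plane meeting `[0,1]^d`, hence meeting `K₀`; and its `ℓ`-fold
sumset lies in the finitely many homothetic copies `(z₁ + ⋯ + z_ℓ + ℓK₀)/N` of `ℓK₀`, so it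
is nowhere dense.
-/

open Metric

section NowhereDense

variable {X : Type*} [TopologicalSpace X]

lemma IsNowhereDense.union {s t : Set X} (hs : IsNowhereDense s) (ht : IsNowhereDense t) :
    IsNowhereDense (s ∪ t) := by
  rw [IsNowhereDense, closure_union, union_comm,
    interior_union_isClosed_of_interior_empty isClosed_closure hs, ht]

lemma isNowhereDense_biUnion_finset {ι : Type*} {t : Finset ι} {s : ι → Set X}
    (h : ∀ i ∈ t, IsNowhereDense (s i)) : IsNowhereDense (⋃ i ∈ t, s i) := by
  classical
  induction t using Finset.induction_on with
  | empty => simp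
  | insert i t _ ih =>
    rw [Finset.set_biUnion_insert]
    exact (h i (t.mem_insert_self i)).union (ih fun j hj => h j (Finset.mem_insert_of_mem hj))

lemma isNowhereDense_iUnion {ι : Type*} [Finite ι] {s : ι → Set X}
    (h : ∀ i, IsNowhereDense (s i)) : IsNowhereDense (⋃ i, s i) := by
  cases nonempty_fintype ι
  simpa using isNowhereDense_biUnion_finset (t := Finset.univ) fun i _ => h i

lemma TopologicalSpace.IsTopologicalBasis.interior_eq_empty_iff {b : Set (Set X)}
    (hb : IsTopologicalBasis b) (hb₀ : ∅ ∉ b) {s : Set X} :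
    interior s = ∅ ↔ ∀ U ∈ b, ¬U ⊆ s := by
  refine ⟨fun hs U hU hUs => ?_, fun h => eq_empty_of_forall_notMem fun x hx => ?_⟩
  · have : U ⊆ interior s := interior_maximal hUs (hb.isOpen hU)
    exact hb₀ (subset_empty_iff.mp (hs ▸ this) ▸ hU)
  · obtain ⟨U, hU, -, hUs⟩ := hb.mem_nhds_iff.mp (mem_interior_iff_mem_nhds.mp hx)
    exact h U hU hUs

lemma residual_setOf_isNowhereDense {E : Type*} [TopologicalSpace E] [SecondCountableTopology E]
    {Φ : X → Set E} (hΦ : ∀ x, IsClosed (Φ x)) (hmem : ∀ y, IsClosed {x | y ∈ Φ x})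
    (hdense : Dense {x | IsNowhereDense (Φ x)}) :
    {x | IsNowhereDense (Φ x)} ∈ residual X := by
  obtain ⟨b, hbc, hb₀, hb⟩ := exists_countable_basis E
  set G : Set E → Set X := fun U => {x | ¬U ⊆ Φ x}
  have hG : {x | IsNowhereDense (Φ x)} = ⋂ U ∈ b, G U := by
    ext x
    simp only [G, mem_ofPred_eq, mem_iInter, (hΦ x).isNowhereDense_iff,
      hb.interior_eq_empty_iff hb₀]
  have hGopen (U : Set E) : IsOpen (G U) := by
    have : G U = ⋃ y ∈ U, {x | y ∈ Φ x}ᶜ := by ext; simp [G, not_subset]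
    exact this ▸ isOpen_biUnion fun y _ => (hmem y).isOpen_compl
  rw [hG] at hdense ⊢
  exact (countable_bInter_mem hbc).2 fun U hU =>
    residual_of_dense_open (hGopen U) (hdense.mono (biInter_subset_of_mem hU))

end NowhereDense

section Msum

variable {E : Type*} [AddCommMonoid E]

lemma msum_eq_image (ℓ : ℕ) (K : Set E) :
    msum ℓ K = (fun f : Fin ℓ → E => ∑ i, f i) '' univ.pi fun _ => K := by
  ext x
  simp [msum]

lemma msum_mono {ℓ : ℕ} {A B : Set E} (h : A ⊆ B) : msum ℓ A ⊆ msum ℓ B := by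
  rintro _ ⟨f, hf, rfl⟩
  exact ⟨f, fun i => h (hf i), rfl⟩

lemma msum_zero (K : Set E) : msum 0 K = {0} := by
  ext x
  simp [msum, eq_comm]

lemma msum_succ (ℓ : ℕ) (K : Set E) :
    msum (ℓ + 1) K = (fun p : E × E => p.1 + p.2) '' (msum ℓ K ×ˢ K) := by
  ext x
  constructor
  · rintro ⟨f, hf, rfl⟩
    exact ⟨(∑ i, f (Fin.castSucc i), f (Fin.last ℓ)), ⟨⟨_, fun i => hf _, rfl⟩, hf _⟩,
      (Fin.sum_univ_castSucc f).symm⟩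
  · rintro ⟨⟨_, a⟩, ⟨⟨f, hf, rfl⟩, ha⟩, rfl⟩
    exact ⟨Fin.snoc f a, Fin.lastCases (by simpa using ha) fun j => by simpa using hf j, by simp⟩

lemma Set.Nonempty.msum {K : Set E} (hK : K.Nonempty) (ℓ : ℕ) : (msum ℓ K).Nonempty := by
  obtain ⟨p, hp⟩ := hK
  exact ⟨∑ _i : Fin ℓ, p, fun _ => p, fun _ => hp, rfl⟩

lemma IsCompact.msum [TopologicalSpace E] [ContinuousAdd E] {K : Set E} (hK : IsCompact K)
    (ℓ : ℕ) : IsCompact (msum ℓ K) := by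
  rw [msum_eq_image]
  exact (isCompact_univ_pi fun _ => hK).image (by fun_prop)

lemma msum_iUnion_image_smul_add_subset {R J : Type*} [Monoid R] [DistribMulAction R E]
    (ℓ : ℕ) (c : R) (t : J → E) (A : Set E) :
    msum ℓ (⋃ j, (fun x => c • (t j + x)) '' A) ⊆
      ⋃ ζ : Fin ℓ → J, (fun x => c • (∑ i, t (ζ i) + x)) '' msum ℓ A := by
  rintro _ ⟨f, hf, rfl⟩
  simp only [mem_iUnion, mem_image] at hf
  choose ζ a ha hfa using hf
  refine mem_iUnion.2 ⟨ζ, ∑ i, a i, ⟨a, ha, rfl⟩, ?_⟩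
  simp only [← hfa, ← Finset.smul_sum, Finset.sum_add_distrib]

end Msum

namespace TopologicalSpace.NonemptyCompacts

variable {E : Type*} [AddCommMonoid E] [TopologicalSpace E] [ContinuousAdd E]

protected def msum (ℓ : ℕ) (K : NonemptyCompacts E) : NonemptyCompacts E :=
  ⟨⟨_root_.msum ℓ K, K.isCompact.msum ℓ⟩, K.nonempty.msum ℓ⟩

@[simp]
lemma coe_msum (ℓ : ℕ) (K : NonemptyCompacts E) : (K.msum ℓ : Set E) = msum ℓ K := rfl

lemma continuous_msum (ℓ : ℕ) :
    Continuous (NonemptyCompacts.msum ℓ : NonemptyCompacts E → NonemptyCompacts E) := by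
  induction ℓ with
  | zero =>
    have : NonemptyCompacts.msum 0 = fun _ : NonemptyCompacts E => ({0} : NonemptyCompacts E) :=
      funext fun K => NonemptyCompacts.ext <| by
        rw [coe_msum, msum_zero, NonemptyCompacts.coe_singleton]
    exact this ▸ continuous_const
  | succ ℓ ih =>
    have : NonemptyCompacts.msum (ℓ + 1) =
        fun K : NonemptyCompacts E => (K.msum ℓ ×ˢ K).map _ continuous_add :=
      funext fun K => NonemptyCompacts.ext <| by
        rw [coe_msum, msum_succ, coe_map, coe_prod, coe_msum]
    rw [this]
    exact continuous_add.nonemptyCompacts_map.comp (continuous_prod.comp (ih.prodMk continuous_id))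

lemma isClosed_setOf_mem_msum_image [T1Space E] {X : Type*} [TopologicalSpace X] {f : X → E}
    (hf : Continuous f) (ℓ : ℕ) (y : E) :
    IsClosed {K : NonemptyCompacts X | y ∈ msum ℓ (f '' K)} := by
  have : {K : NonemptyCompacts X | y ∈ msum ℓ (f '' K)} =
      (fun K => (K.map f hf).msum ℓ) ⁻¹' {C | ((C : Set E) ∩ {y}).Nonempty} := by
    ext K
    simp
  exact this ▸ (isClosed_inter_nonempty_of_isClosed isClosed_singleton).preimage
    ((continuous_msum ℓ).comp hf.nonemptyCompacts_map)

end TopologicalSpace.NonemptyCompacts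

lemma isCompact_unitCube (d : ℕ) : IsCompact (unitCube d) := by
  have : unitCube d = (EuclideanSpace.equiv (Fin d) ℝ).toHomeomorph ⁻¹' Icc 0 1 := by
    ext
    simp [unitCube, Pi.le_def, forall_and]
  exact this ▸ Homeomorph.isCompact_preimage _ |>.2 isCompact_Icc

section Grid

variable {d : ℕ} (N : ℕ) [NeZero N]

lemma exists_fin_mul_sub_mem_Icc {t : ℝ} (ht : t ∈ Icc (0 : ℝ) 1) :
    ∃ m : Fin N, N * t - m ∈ Icc (0 : ℝ) 1 := by
  have hN : 0 < N := Nat.pos_of_neZero N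
  rcases ht.2.eq_or_lt with rfl | ht₁
  · refine ⟨⟨N - 1, by omega⟩, ?_⟩
    simp [Nat.cast_sub (Nat.one_le_of_lt hN)]
  · have hNt : 0 ≤ N * t := mul_nonneg (Nat.cast_nonneg N) ht.1
    refine ⟨⟨⌊N * t⌋₊, (Nat.floor_lt hNt).2 ?_⟩, sub_nonneg.2 (Nat.floor_le hNt), ?_⟩
    · simpa using mul_lt_mul_of_pos_left ht₁ (Nat.cast_pos.2 hN)
    · linarith [Nat.lt_floor_add_one (N * t)]

/-- `x ↦ (z + x) / N`, mapping `[0,1]^d` onto the cell of the grid of mesh `1/N` with lower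
corner `z / N`. -/
noncomputable def cellMap (z : Fin d → Fin N) :
    EuclideanSpace ℝ (Fin d) ≃ᵃ[ℝ] EuclideanSpace ℝ (Fin d) :=
  (AffineEquiv.constVAdd ℝ _ (WithLp.toLp 2 fun i => (z i : ℝ))).trans
    (LinearEquiv.smulOfNeZero ℝ _ (N : ℝ)⁻¹ (by simp [NeZero.ne N])).toAffineEquiv

lemma coe_cellMap (z : Fin d → Fin N) :
    ⇑(cellMap N z) = fun x => (N : ℝ)⁻¹ • (WithLp.toLp 2 (fun i => (z i : ℝ)) + x) :=
  rfl

lemma cellMap_apply_apply (z : Fin d → Fin N) (x : EuclideanSpace ℝ (Fin d)) (i : Fin d) :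
    cellMap N z x i = (z i + x i) / N := by
  simp [coe_cellMap, div_eq_inv_mul, mul_add]

lemma cellMap_mem_unitCube (z : Fin d → Fin N) {x : EuclideanSpace ℝ (Fin d)}
    (hx : x ∈ unitCube d) : cellMap N z x ∈ unitCube d := by
  intro i
  have hN : (0 : ℝ) < N := by simp [Nat.pos_of_neZero N]
  have hz : (z i : ℝ) + 1 ≤ N := by exact_mod_cast (z i).isLt
  rw [cellMap_apply_apply, mem_Icc, le_div_iff₀ hN, div_le_one hN]
  constructor <;> linarith [(hx i).1, (hx i).2]

lemma exists_cellMap_eq {p : EuclideanSpace ℝ (Fin d)} (hp : p ∈ unitCube d) :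
    ∃ z : Fin d → Fin N, ∃ y ∈ unitCube d, cellMap N z y = p := by
  choose z hz using fun i => exists_fin_mul_sub_mem_Icc N (hp i)
  refine ⟨z, WithLp.toLp 2 fun i => N * p i - z i, hz, ?_⟩
  ext i
  rw [cellMap_apply_apply]
  field_simp [NeZero.ne N]
  simp

lemma dist_cellMap_le_diam_div (z : Fin d → Fin N) {x y : EuclideanSpace ℝ (Fin d)}
    (hx : x ∈ unitCube d) (hy : y ∈ unitCube d) :
    dist (cellMap N z x) (cellMap N z y) ≤ diam (unitCube d) / N := by
  rw [coe_cellMap, dist_smul₀, dist_add_left, norm_inv, RCLike.norm_natCast, inv_mul_eq_div]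
  gcongr
  exact dist_le_diam_of_mem (isCompact_unitCube d).isBounded hx hy

noncomputable def cubeCellMap (z : Fin d → Fin N) (q : Cube d) : Cube d :=
  ⟨cellMap N z q, cellMap_mem_unitCube N z q.2⟩

lemma continuous_cubeCellMap (z : Fin d → Fin N) : Continuous (cubeCellMap N z) :=
  ((cellMap N z).toAffineMap.continuous_of_finiteDimensional.comp
    continuous_subtype_val).subtype_mk _

variable (K₀ K : NonemptyCompacts (Cube d))

noncomputable def gridCopy : NonemptyCompacts (Cube d) where
  carrier := ⋃ z ∈ {z | ∃ p ∈ realize d K, ∃ y ∈ unitCube d, cellMap N z y = p},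
    cubeCellMap N z '' K₀
  isCompact' := (toFinite _).isCompact_biUnion fun z _ =>
    K₀.isCompact.image (continuous_cubeCellMap N z)
  nonempty' := by
    obtain ⟨p, hp⟩ := K.nonempty
    obtain ⟨z, y, hy, hzy⟩ := exists_cellMap_eq N p.2
    obtain ⟨q, hq⟩ := K₀.nonempty
    exact ⟨cubeCellMap N z q, mem_biUnion ⟨p, ⟨p, hp, rfl⟩, y, hy, hzy⟩ (mem_image_of_mem _ hq)⟩

lemma coe_gridCopy : (gridCopy N K₀ K : Set (Cube d)) =
    ⋃ z ∈ {z | ∃ p ∈ realize d K, ∃ y ∈ unitCube d, cellMap N z y = p},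
      cubeCellMap N z '' K₀ :=
  rfl

lemma dist_gridCopy_le : dist K (gridCopy N K₀ K) ≤ diam (unitCube d) / N := by
  rw [NonemptyCompacts.dist_eq]
  obtain ⟨q₀, hq₀⟩ := K₀.nonempty
  refine hausdorffDist_le_of_mem_dist (by positivity) (fun p hp => ?_) fun x hx => ?_
  · obtain ⟨z, y, hy, hzy⟩ := exists_cellMap_eq N p.2
    refine ⟨cubeCellMap N z q₀,
      mem_biUnion ⟨p, ⟨p, hp, rfl⟩, y, hy, hzy⟩ (mem_image_of_mem _ hq₀), ?_⟩
    rw [Subtype.dist_eq, ← hzy]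
    exact dist_cellMap_le_diam_div N z hy q₀.2
  · simp only [coe_gridCopy, mem_iUnion₂, mem_image] at hx
    obtain ⟨z, ⟨_, ⟨p, hp, rfl⟩, y, hy, hzy⟩, q, -, rfl⟩ := hx
    refine ⟨p, hp, ?_⟩
    rw [Subtype.dist_eq, ← hzy]
    exact dist_cellMap_le_diam_div N z q.2 hy

variable {N K₀ K} in
lemma HitsAll.gridCopy {k : ℕ} (h₀ : HitsAll d k K₀) (h : HitsAll d k K) :
    HitsAll d k (gridCopy N K₀ K) := by
  intro V hV hVk hVcube
  obtain ⟨p, hpK, hpV⟩ := h V hV hVk hVcube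
  obtain ⟨z, y, hy, hzy⟩ := exists_cellMap_eq N p.2
  have hyW : y ∈ V.comap (cellMap N z).toAffineMap := by simpa [hzy] using hpV
  have hWk : finrank ℝ (V.comap (cellMap N z).toAffineMap).direction = k := by
    rw [← hVk, ← AffineSubspace.map_symm, AffineSubspace.map_direction]
    exact (cellMap N z).symm.linear.finrank_map_eq V.direction
  obtain ⟨q, hq, hqW⟩ :=
    h₀ _ ((AffineSubspace.nonempty_iff_ne_bot _).1 ⟨y, hyW⟩) hWk ⟨y, hyW, hy⟩
  exact ⟨cubeCellMap N z q,
    mem_biUnion ⟨p, ⟨p, hpK, rfl⟩, y, hy, hzy⟩ (mem_image_of_mem _ hq), hqW⟩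

lemma realize_gridCopy_subset :
    realize d (gridCopy N K₀ K) ⊆ ⋃ z, cellMap N z '' realize d K₀ := by
  rintro _ ⟨x, hx, rfl⟩
  simp only [coe_gridCopy, mem_iUnion₂, mem_image] at hx
  obtain ⟨z, -, q, hq, rfl⟩ := hx
  exact mem_iUnion.2 ⟨z, q, ⟨q, hq, rfl⟩, rfl⟩

variable {K₀} in
lemma IsNowhereDense.msum_realize_gridCopy {ℓ : ℕ}
    (h : IsNowhereDense (msum ℓ (realize d K₀))) :
    IsNowhereDense (msum ℓ (realize d (gridCopy N K₀ K))) := by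
  have hN : (N : ℝ)⁻¹ ≠ 0 := by simp [NeZero.ne N]
  have hsub := msum_mono (ℓ := ℓ) (realize_gridCopy_subset N K₀ K)
  simp only [coe_cellMap] at hsub
  refine (isNowhereDense_iUnion fun ζ => ?_).mono
    (hsub.trans (msum_iUnion_image_smul_add_subset ℓ _ _ _))
  exact ((Homeomorph.addLeft _).trans (Homeomorph.smulOfNeZero _ hN)).isInducing
    |>.isNowhereDense_image h

end Grid

lemma dense_setOf_isNowhereDense_msum {d k ℓ : ℕ} {K₀ : NonemptyCompacts (Cube d)}
    (h₀ : HitsAll d k K₀) (hnwd : IsNowhereDense (msum ℓ (realize d K₀))) :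
    Dense {K : {K : NonemptyCompacts (Cube d) // HitsAll d k K} |
      IsNowhereDense (msum ℓ (realize d K))} := by
  refine dense_iff.2 fun K r hr => ?_
  obtain ⟨n, hn⟩ := exists_nat_gt (diam (unitCube d) / r)
  refine ⟨⟨gridCopy (n + 1) K₀ K, h₀.gridCopy K.2⟩, ?_, hnwd.msum_realize_gridCopy _ _⟩
  rw [mem_ball, Subtype.dist_eq, dist_comm]
  refine (dist_gridCopy_le _ _ _).trans_lt ?_
  rw [div_lt_iff₀ hr] at hn
  rw [div_lt_iff₀ (by positivity)]
  push_cast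
  linarith

theorem generic_msum_nwd_general (d k ℓ : ℕ)
    (h0 : ∃ K₀ : NonemptyCompacts (Cube d), HitsAll d k K₀ ∧
      IsNowhereDense (msum ℓ (realize d K₀))) :
    {K : {K : NonemptyCompacts (Cube d) // HitsAll d k K} |
        IsNowhereDense (msum ℓ (realize d (K : NonemptyCompacts (Cube d))))} ∈
      residual {K : NonemptyCompacts (Cube d) // HitsAll d k K} := by
  obtain ⟨K₀, h₀, hnwd⟩ := h0
  refine residual_setOf_isNowhereDense
    (fun K => ((K.1.isCompact.image continuous_subtype_val).msum ℓ).isClosed) (fun y => ?_)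
    (dense_setOf_isNowhereDense_msum h₀ hnwd)
  exact (NonemptyCompacts.isClosed_setOf_mem_msum_image continuous_subtype_val ℓ y).preimage
    continuous_subtype_val

/-- If some `K₀ ∈ 𝒦_k([0,1]^d)` has `ℓK₀` nowhere dense, then the generic element
`K` of `𝒦_k([0,1]^d)` (with the Hausdorff metric) has `ℓK` nowhere dense. -/
theorem generic_msum_nwd (d k ℓ : ℕ) (hd : 2 ≤ d) (hk : k < d) (hℓ : 2 ≤ ℓ)
    (h0 : ∃ K₀ : NonemptyCompacts (Cube d), HitsAll d k K₀ ∧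
      IsNowhereDense (msum ℓ (realize d K₀))) :
    {K : {K : NonemptyCompacts (Cube d) // HitsAll d k K} |
        IsNowhereDense (msum ℓ (realize d (K : NonemptyCompacts (Cube d))))} ∈
      residual {K : NonemptyCompacts (Cube d) // HitsAll d k K} :=
  generic_msum_nwd_general d k ℓ h0
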